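/- Let S and A be finite sets, let γ ∈ [0,1), let d₀ be a probability distribution on S, and let {M_i}_{i≥1} be a sequence of MDPs that share S, A, γ, d₀, where M_i has transition function P_i : S × A → Δ(S) and mean reward function R_i : S × A → ℝ with |R_i(s,a)| ≤ Rmax for all i, s, a. Suppose there exist ε_P ≥ 0 and ε_R ≥ 0 such that for every i and all s ∈ S, a ∈ A: ∑_{s'∈S} |P_i(s'|s,a) − P_{i+1}(s'|s,a)| ≤ ε_P and |R_i(s,a) − R_{i+1}(s,a)| ≤ ε_R. Then for every policy π, every k ≥ 1 and every δ ≥ 1, |ρ(π, M_k) − ρ(π, M_{k+δ})| ≤ δ · ( γ·Rmax·ε_P/(1−γ)² + ε_R/(1−γ) ). -/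

import Mathlib

open scoped BigOperators

/-- The distribution over states at time `t` when running policy `pol` in an MDP
with transition function `P` and start-state distribution `d0`. -/
noncomputable def stateDist {S A : Type*} [Fintype S] [Fintype A]
    (P : S → A → S → ℝ) (pol : S → A → ℝ) (d0 : S → ℝ) : ℕ → S → ℝ
  | 0 => d0
  | (t + 1) => fun s' => ∑ s : S, ∑ a : A, stateDist P pol d0 t s * pol s a * P s a s'

/-- The performance `ρ(π, M) = ∑_{t=0}^∞ γ^t E[R(S_t, A_t)]`. -/
noncomputable def perf {S A : Type*} [Fintype S] [Fintype A]
    (P : S → A → S → ℝ) (R : S → A → ℝ) (pol : S → A → ℝ)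
    (d0 : S → ℝ) (γ : ℝ) : ℝ :=
  ∑' t : ℕ, γ ^ t * ∑ s : S, stateDist P pol d0 t s * ∑ a : A, pol s a * R s a

/-- `P s a : S → ℝ` is a probability distribution over next states for each `(s, a)`. -/
def IsTransition {S A : Type*} [Fintype S] (P : S → A → S → ℝ) : Prop :=
  ∀ s a, (∀ s', 0 ≤ P s a s') ∧ ∑ s' : S, P s a s' = 1

/-- `pol s : A → ℝ` is a probability distribution over actions for each state `s`. -/
def IsPolicy {S A : Type*} [Fintype A] (pol : S → A → ℝ) : Prop :=
  ∀ s, (∀ a, 0 ≤ pol s a) ∧ ∑ a : A, pol s a = 1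

/-- `d0` is a probability distribution over states. -/
def IsDist {S : Type*} [Fintype S] (d0 : S → ℝ) : Prop :=
  (∀ s, 0 ≤ d0 s) ∧ ∑ s : S, d0 s = 1

/-!
Write `d_t`, `d'_t` for the state distributions at time `t` in two consecutive MDPs. Each step
pushes them forward by the policy-averaged transition matrices, and
`d_t K - d'_t K' = (d_t - d'_t) K + d'_t (K - K')`: a stochastic matrix does not increase the
`ℓ¹` norm, and the second term has `ℓ¹` norm at most `εP`. So `‖d_t - d'_t‖₁ ≤ t εP`, the
expected rewards at time `t` differ by at most `t εP Rmax + εR`, and summing against `γ^t` with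
`∑ t γ^t = γ / (1 - γ)²` gives the bound for one step `i → i + 1`. The triangle inequality
along `k, k + 1, …, k + δ` gives the factor `δ`.
-/

open Matrix

namespace IsDist

variable {ι κ : Type*} [Fintype ι] [Fintype κ] {w : ι → ℝ}

theorem dotProduct_le (hw : IsDist w) {f : ι → ℝ} {M : ℝ} (hf : ∀ i, f i ≤ M) :
    w ⬝ᵥ f ≤ M :=
  calc w ⬝ᵥ f ≤ ∑ i, w i * M :=
        Finset.sum_le_sum fun i _ => mul_le_mul_of_nonneg_left (hf i) (hw.1 i)
    _ = M := by rw [← Finset.sum_mul, hw.2, one_mul]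

theorem abs_dotProduct_le (hw : IsDist w) {f : ι → ℝ} {M : ℝ} (hf : ∀ i, |f i| ≤ M) :
    |w ⬝ᵥ f| ≤ M :=
  calc |w ⬝ᵥ f| ≤ ∑ i, w i * |f i| :=
        (Finset.abs_sum_le_sum_abs _ _).trans_eq (by simp only [abs_mul, abs_of_nonneg (hw.1 _)])
    _ ≤ M := hw.dotProduct_le (f := fun i => |f i|) hf

theorem vecMul (hw : IsDist w) {K : Matrix ι κ ℝ} (hK : ∀ i, IsDist (K i)) :
    IsDist (w ᵥ* K) := by
  refine ⟨fun j => Finset.sum_nonneg fun i _ => mul_nonneg (hw.1 i) ((hK i).1 j), ?_⟩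
  calc ∑ j, ∑ i, w i * K i j = ∑ i, w i * ∑ j, K i j := by
        rw [Finset.sum_comm]; simp only [Finset.mul_sum]
    _ = 1 := by simp only [fun i => (hK i).2, mul_one, hw.2]

end IsDist

section L1

variable {ι κ : Type*} [Fintype ι] [Fintype κ]

theorem abs_dotProduct_le_sum_abs_mul {v f : ι → ℝ} {M : ℝ} (hf : ∀ i, |f i| ≤ M) :
    |v ⬝ᵥ f| ≤ (∑ i, |v i|) * M := by
  refine (Finset.abs_sum_le_sum_abs _ _).trans ?_
  rw [Finset.sum_mul]
  exact Finset.sum_le_sum fun i _ => by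
    rw [abs_mul]; exact mul_le_mul_of_nonneg_left (hf i) (abs_nonneg _)

theorem sum_abs_vecMul_le (v : ι → ℝ) (K : Matrix ι κ ℝ) :
    ∑ j, |(v ᵥ* K) j| ≤ ∑ i, |v i| * ∑ j, |K i j| :=
  calc ∑ j, |(v ᵥ* K) j| ≤ ∑ j, ∑ i, |v i| * |K i j| :=
        Finset.sum_le_sum fun j _ =>
          (Finset.abs_sum_le_sum_abs _ _).trans_eq (by simp only [abs_mul])
    _ = ∑ i, |v i| * ∑ j, |K i j| := by rw [Finset.sum_comm]; simp only [Finset.mul_sum]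

theorem sum_abs_vecMul_sub_vecMul_le {d d' : ι → ℝ} {K K' : Matrix ι κ ℝ} {ε : ℝ}
    (hd' : IsDist d') (hK : ∀ i, IsDist (K i)) (hKK' : ∀ i, ∑ j, |K i j - K' i j| ≤ ε) :
    ∑ j, |(d ᵥ* K) j - (d' ᵥ* K') j| ≤ ∑ i, |d i - d' i| + ε := by
  have hsplit : d ᵥ* K - d' ᵥ* K' = (d - d') ᵥ* K + d' ᵥ* (K - K') := by
    rw [sub_vecMul, vecMul_sub]; abel
  have hmoved : ∑ j, |((d - d') ᵥ* K) j| ≤ ∑ i, |d i - d' i| := by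
    refine (sum_abs_vecMul_le _ _).trans_eq (Finset.sum_congr rfl fun i _ => ?_)
    simp only [fun j => abs_of_nonneg ((hK i).1 j), (hK i).2, mul_one, Pi.sub_apply]
  have hchanged : ∑ j, |(d' ᵥ* (K - K')) j| ≤ ε := by
    refine (sum_abs_vecMul_le _ _).trans ?_
    simp only [abs_of_nonneg (hd'.1 _)]
    exact hd'.dotProduct_le hKK'
  calc ∑ j, |(d ᵥ* K) j - (d' ᵥ* K') j|
      ≤ ∑ j, (|((d - d') ᵥ* K) j| + |(d' ᵥ* (K - K')) j|) :=
        Finset.sum_le_sum fun j _ => by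
          rw [← Pi.sub_apply (d ᵥ* K), hsplit]; exact abs_add_le _ _
    _ ≤ ∑ i, |d i - d' i| + ε := by rw [Finset.sum_add_distrib]; exact add_le_add hmoved hchanged

theorem abs_dotProduct_sub_dotProduct_le {d d' r r' : ι → ℝ} {M ε : ℝ} (hd' : IsDist d')
    (hr : ∀ i, |r i| ≤ M) (hrr' : ∀ i, |r i - r' i| ≤ ε) :
    |d ⬝ᵥ r - d' ⬝ᵥ r'| ≤ (∑ i, |d i - d' i|) * M + ε := by
  have hsplit : d ⬝ᵥ r - d' ⬝ᵥ r' = (d - d') ⬝ᵥ r + d' ⬝ᵥ (r - r') := by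
    rw [sub_dotProduct, dotProduct_sub]; ring
  rw [hsplit]
  exact (abs_add_le _ _).trans (add_le_add (abs_dotProduct_le_sum_abs_mul hr)
    (hd'.abs_dotProduct_le hrr'))

end L1

theorem abs_tsum_geometric_mul_sub_le {γ M a b : ℝ} (hγ0 : 0 ≤ γ) (hγ1 : γ < 1) {r r' : ℕ → ℝ}
    (hr : ∀ t, |r t| ≤ M) (hr' : ∀ t, |r' t| ≤ M) (hrr' : ∀ t, |r t - r' t| ≤ t * a + b) :
    |∑' t, γ ^ t * r t - ∑' t, γ ^ t * r' t| ≤ γ * a / (1 - γ) ^ 2 + b / (1 - γ) := by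
  have hγ : ‖γ‖ < 1 := by rwa [Real.norm_of_nonneg hγ0]
  have summable {u : ℕ → ℝ} (hu : ∀ t, |u t| ≤ M) : Summable fun t => γ ^ t * u t :=
    ((summable_geometric_of_lt_one hγ0 hγ1).mul_right M).of_norm_bounded fun t => by
      rw [Real.norm_eq_abs, abs_mul, abs_of_nonneg (pow_nonneg hγ0 t)]
      exact mul_le_mul_of_nonneg_left (hu t) (pow_nonneg hγ0 t)
  have hbound :
      HasSum (fun t : ℕ => γ ^ t * (t * a + b)) (γ * a / (1 - γ) ^ 2 + b / (1 - γ)) := by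
    have h := ((hasSum_coe_mul_geometric_of_norm_lt_one hγ).mul_right a).add
      ((hasSum_geometric_of_lt_one hγ0 hγ1).mul_right b)
    rw [show γ * a / (1 - γ) ^ 2 + b / (1 - γ) = γ / (1 - γ) ^ 2 * a + (1 - γ)⁻¹ * b by ring]
    exact h.congr_fun fun t => by ring
  rw [← (summable hr).tsum_sub (summable hr')]
  refine (Real.norm_eq_abs _).symm.trans_le (tsum_of_norm_bounded hbound fun t => ?_)
  rw [Real.norm_eq_abs, ← mul_sub, abs_mul, abs_of_nonneg (pow_nonneg hγ0 t)]
  exact mul_le_mul_of_nonneg_left (hrr' t) (pow_nonneg hγ0 t)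

section MDP

variable {S A : Type*} [Fintype A]

def policyReward (R : S → A → ℝ) (pol : S → A → ℝ) : S → ℝ :=
  fun s => pol s ⬝ᵥ R s

variable {P P' : S → A → S → ℝ} {R R' : S → A → ℝ} {pol : S → A → ℝ} {d0 : S → ℝ}

theorem abs_policyReward_le (hpol : IsPolicy pol) {Rmax : ℝ} (hR : ∀ s a, |R s a| ≤ Rmax)
    (s : S) :
    |policyReward R pol s| ≤ Rmax :=
  IsDist.abs_dotProduct_le (hpol s) (hR s)

theorem abs_policyReward_sub_le (hpol : IsPolicy pol) {εR : ℝ}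
    (hRR' : ∀ s a, |R s a - R' s a| ≤ εR) (s : S) :
    |policyReward R pol s - policyReward R' pol s| ≤ εR := by
  rw [policyReward, policyReward, ← dotProduct_sub]
  exact IsDist.abs_dotProduct_le (hpol s) (hRR' s)

variable [Fintype S]

def policyKernel (P : S → A → S → ℝ) (pol : S → A → ℝ) : Matrix S S ℝ :=
  fun s => pol s ᵥ* P s

theorem stateDist_succ (t : ℕ) :
    stateDist P pol d0 (t + 1) = stateDist P pol d0 t ᵥ* policyKernel P pol := by
  ext s'
  simp only [stateDist, vecMul, dotProduct, policyKernel, Finset.mul_sum, mul_assoc]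

theorem perf_eq_tsum (γ : ℝ) :
    perf P R pol d0 γ = ∑' t, γ ^ t * (stateDist P pol d0 t ⬝ᵥ policyReward R pol) := rfl

theorem isDist_stateDist (hd0 : IsDist d0) (hP : IsTransition P) (hpol : IsPolicy pol) (t : ℕ) :
    IsDist (stateDist P pol d0 t) := by
  induction t with
  | zero => exact hd0
  | succ t ih => rw [stateDist_succ]; exact ih.vecMul fun s => IsDist.vecMul (hpol s) (hP s)

theorem sum_abs_stateDist_sub_le (hd0 : IsDist d0) (hP : IsTransition P) (hP' : IsTransition P')
    (hpol : IsPolicy pol) {εP : ℝ} (hPP' : ∀ s a, ∑ s', |P s a s' - P' s a s'| ≤ εP) (t : ℕ) :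
    ∑ s, |stateDist P pol d0 t s - stateDist P' pol d0 t s| ≤ t * εP := by
  have hkernel (s : S) : ∑ s', |policyKernel P pol s s' - policyKernel P' pol s s'| ≤ εP := by
    simpa [policyKernel] using sum_abs_vecMul_sub_vecMul_le (d := pol s) (hpol s) (hP s) (hPP' s)
  induction t with
  | zero => simp [stateDist]
  | succ t ih =>
    rw [stateDist_succ, stateDist_succ]
    refine (sum_abs_vecMul_sub_vecMul_le (isDist_stateDist hd0 hP' hpol t)
      (fun s => IsDist.vecMul (hpol s) (hP s)) hkernel).trans ?_
    push_cast; linarith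

theorem abs_perf_sub_le {γ Rmax εP εR : ℝ} (hγ0 : 0 ≤ γ) (hγ1 : γ < 1)
    (hd0 : IsDist d0) (hP : IsTransition P) (hP' : IsTransition P') (hpol : IsPolicy pol)
    (hR : ∀ s a, |R s a| ≤ Rmax) (hR' : ∀ s a, |R' s a| ≤ Rmax)
    (hPP' : ∀ s a, ∑ s', |P s a s' - P' s a s'| ≤ εP) (hRR' : ∀ s a, |R s a - R' s a| ≤ εR) :
    |perf P R pol d0 γ - perf P' R' pol d0 γ| ≤ γ * Rmax * εP / (1 - γ) ^ 2 + εR / (1 - γ) := by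
  have hreward {Q : S → A → S → ℝ} {W : S → A → ℝ} (hQ : IsTransition Q)
      (hW : ∀ s a, |W s a| ≤ Rmax) (t : ℕ) :
      |stateDist Q pol d0 t ⬝ᵥ policyReward W pol| ≤ Rmax :=
    (isDist_stateDist hd0 hQ hpol t).abs_dotProduct_le (abs_policyReward_le hpol hW)
  have hRmax : 0 ≤ Rmax := (abs_nonneg _).trans (hreward hP hR 0)
  rw [perf_eq_tsum, perf_eq_tsum, show γ * Rmax * εP = γ * (εP * Rmax) by ring]
  refine abs_tsum_geometric_mul_sub_le hγ0 hγ1 (hreward hP hR) (hreward hP' hR') fun t => ?_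
  refine (abs_dotProduct_sub_dotProduct_le (isDist_stateDist hd0 hP' hpol t)
    (abs_policyReward_le hpol hR) (abs_policyReward_sub_le hpol hRR')).trans ?_
  rw [← mul_assoc]
  gcongr
  exact sum_abs_stateDist_sub_le hd0 hP hP' hpol hPP' t

end MDP

theorem lipschitz_smooth_performance_ns_general
    {S A : Type*} [Fintype S] [Fintype A]
    (γ Rmax εP εR : ℝ) (hγ0 : 0 ≤ γ) (hγ1 : γ < 1)
    (d0 : S → ℝ) (hd0 : IsDist d0)
    (P : ℕ → S → A → S → ℝ) (R : ℕ → S → A → ℝ)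
    (hP : ∀ i, IsTransition (P i))
    (hR : ∀ i s a, |R i s a| ≤ Rmax)
    (hPlip : ∀ i s a, ∑ s' : S, |P i s a s' - P (i + 1) s a s'| ≤ εP)
    (hRlip : ∀ i s a, |R i s a - R (i + 1) s a| ≤ εR)
    (pol : S → A → ℝ) (hpol : IsPolicy pol)
    (k δ : ℕ) :
    |perf (P k) (R k) pol d0 γ - perf (P (k + δ)) (R (k + δ)) pol d0 γ| ≤
      (δ : ℝ) * (γ * Rmax * εP / (1 - γ) ^ 2 + εR / (1 - γ)) := by
  have hstep (i : ℕ) : dist (perf (P (k + i)) (R (k + i)) pol d0 γ)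
      (perf (P (k + i + 1)) (R (k + i + 1)) pol d0 γ) ≤
      γ * Rmax * εP / (1 - γ) ^ 2 + εR / (1 - γ) :=
    abs_perf_sub_le hγ0 hγ1 hd0 (hP _) (hP _) hpol (hR _) (hR _) (hPlip _) (hRlip _)
  have htelescope :=
    dist_le_range_sum_of_dist_le (f := fun i => perf (P (k + i)) (R (k + i)) pol d0 γ) δ
      fun _ => hstep _
  simpa only [Real.dist_eq, add_zero, Finset.sum_const, Finset.card_range, nsmul_eq_mul]
    using htelescope

/-- **Lipschitz smooth performance** for a sequence of MDPs: if consecutive MDPs have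
transition functions within `εP` (in total variation, i.e. L1) and mean rewards within `εR`,
then for every policy the performance between episodes `k` and `k + δ` differs by at most
`δ·(γ·Rmax·εP/(1−γ)² + εR/(1−γ))`. -/
theorem lipschitz_smooth_performance_ns
    {S A : Type*} [Fintype S] [Fintype A]
    (γ Rmax εP εR : ℝ) (hγ0 : 0 ≤ γ) (hγ1 : γ < 1)
    (hεP : 0 ≤ εP) (hεR : 0 ≤ εR)
    (d0 : S → ℝ) (hd0 : IsDist d0)
    (P : ℕ → S → A → S → ℝ) (R : ℕ → S → A → ℝ)
    (hP : ∀ i, IsTransition (P i))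
    (hR : ∀ i s a, |R i s a| ≤ Rmax)
    (hPlip : ∀ i s a, ∑ s' : S, |P i s a s' - P (i + 1) s a s'| ≤ εP)
    (hRlip : ∀ i s a, |R i s a - R (i + 1) s a| ≤ εR)
    (pol : S → A → ℝ) (hpol : IsPolicy pol)
    (k δ : ℕ) (hk : 1 ≤ k) (hδ : 1 ≤ δ) :
    |perf (P k) (R k) pol d0 γ - perf (P (k + δ)) (R (k + δ)) pol d0 γ| ≤
      (δ : ℝ) * (γ * Rmax * εP / (1 - γ) ^ 2 + εR / (1 - γ)) :=
  lipschitz_smooth_performance_ns_general γ Rmax εP εR hγ0 hγ1 d0 hd0 P R hP hR hPlip hRlip pol hpol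
    k δ
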